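/- arXiv:math/0306241 — 5 statements merged into one kernel-verified Lean document; each statement's English description precedes it below -/
import Mathlib

section
/- Let f : ℝ → ℝ be a reduced function that is analytic on an open neighborhood of 0 and satisfies, for all x, y in a neighborhood of 0 (with x + y also in that neighborhood), the functional equation f(x) + f(y) + 2·f(x)·f(y) + f(x+y)·f(x)·f(y) = f(x+y). Then there exists a real number a such that f(x) = a·x/(1 − a·x) for all x in some neighborhood of 0. -/
/-!
Near `0` we have `1 + f ≠ 0`, and `g = f / (1 + f)` turns the functional equation into Cauchy's
equation `g (x + y) = g x + g y`. Differentiating it in `y` at `y = 0` gives `g' ≡ g' 0 = a`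
on a ball around `0`, so `g x = a * x` there, and solving `f / (1 + f) = a * x` for `f` gives
`f x = a * x / (1 - a * x)`.
-/

open Metric Set Filter Topology

theorem div_one_add_eq_add_of_functional_eq {K : Type*} [Field K] {u v w : K}
    (hu : 1 + u ≠ 0) (hv : 1 + v ≠ 0) (hw : 1 + w ≠ 0) (h : u + v + 2 * u * v + w * u * v = w) :
    w / (1 + w) = u / (1 + u) + v / (1 + v) := by
  field_simp
  linear_combination -h

theorem eq_div_one_sub_of_div_one_add_eq {K : Type*} [Field K] {u t : K} (hu : 1 + u ≠ 0)
    (h : u / (1 + u) = t) : u = t / (1 - t) := by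
  have ht : 1 - t ≠ 0 := by
    rw [← h, one_sub_div hu, add_sub_cancel_right]
    exact one_div_ne_zero hu
  rw [eq_div_iff ht, ← h]
  field_simp
  ring

theorem hasDerivAt_of_additiveOn_ball {g : ℝ → ℝ} {a r : ℝ} (hg : HasDerivAt g a 0)
    (hadd : ∀ x ∈ ball 0 r, ∀ y ∈ ball 0 r, g (x + y) = g x + g y) {x : ℝ} (hx : x ∈ ball 0 r) :
    HasDerivAt g a x := by
  have hshift : (fun y => g (x + y)) =ᶠ[𝓝 0] fun y => g x + g y := by
    filter_upwards [ball_mem_nhds 0 (pos_of_mem_ball hx)] with y hy using hadd x hx y hy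
  have h : HasDerivAt (fun y => g (x + y)) a (-x + x) := by
    rw [neg_add_cancel, hshift.hasDerivAt_iff]
    exact hg.const_add (g x)
  simpa using h.comp_const_add (-x) x

theorem eqOn_mul_of_additiveOn_ball {g : ℝ → ℝ} {a r : ℝ} (hg : HasDerivAt g a 0)
    (hadd : ∀ x ∈ ball 0 r, ∀ y ∈ ball 0 r, g (x + y) = g x + g y) :
    EqOn g (fun x => a * x) (ball 0 r) := by
  intro x hx
  have h0 : (0 : ℝ) ∈ ball 0 r := mem_ball_self (pos_of_mem_ball hx)
  have hderiv : ∀ y ∈ ball 0 r, HasDerivAt g a y := fun y hy =>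
    hasDerivAt_of_additiveOn_ball hg hadd hy
  refine isOpen_ball.eqOn_of_deriv_eq (convex_ball 0 r).isPreconnected
    (fun y hy => (hderiv y hy).differentiableAt.differentiableWithinAt)
    (differentiable_id.const_mul a).differentiableOn (fun y hy => ?_) h0 ?_ hx
  · simp [(hderiv y hy).deriv]
  · simpa using hadd 0 h0 0 h0

theorem exists_pos_forall_add_mem_of_mem_nhds_zero {E : Type*} [SeminormedAddCommGroup E]
    {S : Set E} (hS : S ∈ 𝓝 0) :
    ∃ r > 0, ∀ x ∈ ball (0 : E) r, ∀ y ∈ ball (0 : E) r, x ∈ S ∧ y ∈ S ∧ x + y ∈ S := by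
  obtain ⟨ε, hε, hball⟩ := Metric.mem_nhds_iff.mp hS
  have hsub : ball (0 : E) (ε / 2) ⊆ ball 0 ε := ball_subset_ball (by linarith)
  refine ⟨ε / 2, half_pos hε, fun x hx y hy => ⟨hball (hsub hx), hball (hsub hy), hball ?_⟩⟩
  rw [mem_ball_zero_iff] at *
  calc ‖x + y‖ ≤ ‖x‖ + ‖y‖ := norm_add_le x y
    _ < ε := by linarith

/-- Every reduced function, analytic on an open neighborhood of `0`,
satisfying the functional equation
`f x + f y + 2 * f x * f y + f (x + y) * f x * f y = f (x + y)`
for all `x, y` in a neighborhood of `0` (with `x + y` also in that neighborhood),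
is of the form `x ↦ a * x / (1 - a * x)` near `0`. -/
theorem geometric_functional_equation (f : ℝ → ℝ) (h0 : f 0 = 0)
    (hf : ∃ U ∈ nhds (0 : ℝ), IsOpen U ∧ (∀ x ∈ U, AnalyticAt ℝ f x) ∧
      ∀ x ∈ U, ∀ y ∈ U, x + y ∈ U →
        f x + f y + 2 * f x * f y + f (x + y) * f x * f y = f (x + y)) :
    ∃ a : ℝ, ∀ᶠ x in nhds (0 : ℝ), f x = a * x / (1 - a * x) := by
  obtain ⟨U, hU, -, hUa, hFE⟩ := hf
  have hf0 : DifferentiableAt ℝ f 0 := (hUa 0 (mem_of_mem_nhds hU)).differentiableAt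
  have hne : ∀ᶠ x in 𝓝 0, 1 + f x ≠ 0 :=
    (continuousAt_const.add hf0.continuousAt).eventually_ne (by simp [h0])
  obtain ⟨r, hr, hS⟩ := exists_pos_forall_add_mem_of_mem_nhds_zero (inter_mem hU hne)
  set g : ℝ → ℝ := fun x => f x / (1 + f x)
  have hg : HasDerivAt g (deriv g 0) 0 :=
    (hf0.div ((differentiableAt_const 1).add hf0) hne.self_of_nhds).hasDerivAt
  have hadd : ∀ x ∈ ball 0 r, ∀ y ∈ ball 0 r, g (x + y) = g x + g y := by
    intro x hx y hy
    obtain ⟨⟨hxU, hx1⟩, ⟨hyU, hy1⟩, ⟨hxyU, hxy1⟩⟩ := hS x hx y hy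
    exact div_one_add_eq_add_of_functional_eq hx1 hy1 hxy1 (hFE x hxU y hyU hxyU)
  refine ⟨deriv g 0, ?_⟩
  filter_upwards [ball_mem_nhds 0 hr] with x hx
  exact eq_div_one_sub_of_div_one_add_eq (hS x hx x hx).1.2
    (eqOn_mul_of_additiveOn_ball hg hadd hx)
end

section
/- Let f : ℝ → ℝ be a reduced function that is analytic on an open neighborhood of 0 and satisfies, for all x, y in a sufficiently small neighborhood of 0, the logarithmic functional equation f((x/(1−x))·(y/(1−y))) + f(x) + f(y) = f(x+y). Then there exists a real number a such that f(x) = −a·log(1 − x) for all x in some neighborhood of 0. -/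
/-!
Differentiating the functional equation in `y` at `y = 0` gives
`f' x = f' 0 * x / (1 - x) + f' 0 = f' 0 / (1 - x)` for `x` near `0`. Hence `f` and
`x ↦ -f' 0 * log (1 - x)` have the same derivative on a ball around `0` and agree at `0`,
so they coincide on that ball.
-/

open Filter Topology Real Metric Set

lemma hasDerivAt_neg_mul_log_one_sub (a : ℝ) {x : ℝ} (hx : x ≠ 1) :
    HasDerivAt (fun x => -a * log (1 - x)) (a / (1 - x)) x := by
  have h1x : 1 - x ≠ 0 := sub_ne_zero.mpr hx.symm
  refine ((((hasDerivAt_id' x).const_sub 1).log h1x).const_mul (-a)).congr_deriv ?_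
  field_simp

lemma hasDerivAt_of_log_functional_equation {f : ℝ → ℝ} {a x : ℝ} (hf0 : HasDerivAt f a 0)
    (hfx : DifferentiableAt ℝ f x) (hx : x ≠ 1)
    (heq : ∀ᶠ y in 𝓝 0, f (x / (1 - x) * (y / (1 - y))) + f x + f y = f (x + y)) :
    HasDerivAt f (a / (1 - x)) x := by
  have hmul : HasDerivAt (fun y => x / (1 - x) * (y / (1 - y))) (x / (1 - x)) 0 := by
    refine (((hasDerivAt_id' (0 : ℝ)).div ((hasDerivAt_id' 0).const_sub 1)
      (by norm_num)).const_mul (x / (1 - x))).congr_deriv ?_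
    simp
  have hlhs : HasDerivAt (fun y => f (x / (1 - x) * (y / (1 - y))) + f x + f y)
      (a * (x / (1 - x)) + a) 0 := by
    have hf0' : HasDerivAt f a (x / (1 - x) * (0 / (1 - 0))) := by simpa using hf0
    exact ((hf0'.comp 0 hmul).add_const (f x)).add hf0
  have hrhs : HasDerivAt (fun y => f (x + y)) (deriv f x) 0 := by
    have hfx' : HasDerivAt f (deriv f x) (x + 0) := by simpa using hfx.hasDerivAt
    exact hfx'.comp_const_add x 0
  have h1x : 1 - x ≠ 0 := sub_ne_zero.mpr hx.symm
  have hderiv : deriv f x = a / (1 - x) := by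
    rw [hrhs.unique (hlhs.congr_of_eventuallyEq (EventuallyEq.symm heq))]
    field_simp
    ring
  exact hderiv ▸ hfx.hasDerivAt

lemma ne_one_of_mem_ball_zero {x r : ℝ} (hx : x ∈ ball 0 r) (hr : r ≤ 1) : x ≠ 1 :=
  ((abs_lt.mp (mem_ball_zero_iff.mp hx)).2.trans_le hr).ne

lemma eqOn_neg_mul_log_one_sub_of_hasDerivAt {f : ℝ → ℝ} {a r : ℝ} (hr0 : 0 < r) (hr1 : r ≤ 1)
    (h0 : f 0 = 0) (hf : ∀ x ∈ ball 0 r, HasDerivAt f (a / (1 - x)) x) :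
    EqOn f (fun x => -a * log (1 - x)) (ball 0 r) := by
  have hlog : ∀ x ∈ ball (0 : ℝ) r, HasDerivAt (fun x => -a * log (1 - x)) (a / (1 - x)) x :=
    fun x hx => hasDerivAt_neg_mul_log_one_sub a (ne_one_of_mem_ball_zero hx hr1)
  exact isOpen_ball.eqOn_of_deriv_eq (convex_ball 0 r).isPreconnected
    (fun x hx => (hf x hx).differentiableAt.differentiableWithinAt)
    (fun x hx => (hlog x hx).differentiableAt.differentiableWithinAt)
    (fun x hx => (hf x hx).deriv.trans (hlog x hx).deriv.symm)
    (mem_ball_self hr0) (by simp [h0])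

/-- Every reduced function, analytic on an open neighborhood of `0`,
satisfying the logarithmic functional equation
`f ((x/(1-x)) * (y/(1-y))) + f x + f y = f (x + y)`
for all `x, y` in a sufficiently small neighborhood of `0`,
is of the form `x ↦ -a * log (1 - x)` near `0`. -/
theorem logarithmic_functional_equation (f : ℝ → ℝ) (h0 : f 0 = 0)
    (hf : ∃ U ∈ nhds (0 : ℝ), IsOpen U ∧ ∀ x ∈ U, AnalyticAt ℝ f x)
    (heq : ∃ V ∈ nhds (0 : ℝ), ∀ x ∈ V, ∀ y ∈ V,
      f ((x / (1 - x)) * (y / (1 - y))) + f x + f y = f (x + y)) :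
    ∃ a : ℝ, ∀ᶠ x in nhds (0 : ℝ), f x = -a * Real.log (1 - x) := by
  obtain ⟨U, hU, -, hfU⟩ := hf
  obtain ⟨V, hV, hVeq⟩ := heq
  obtain ⟨ε, hε, hball⟩ := Metric.mem_nhds_iff.mp (inter_mem hU hV)
  have hr0 : 0 < min ε 1 := lt_min hε one_pos
  have hsub : ball 0 (min ε 1) ⊆ U ∩ V := (ball_subset_ball (min_le_left _ _)).trans hball
  have hf0 : HasDerivAt f (deriv f 0) 0 :=
    (hfU 0 (hsub (mem_ball_self hr0)).1).differentiableAt.hasDerivAt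
  refine ⟨deriv f 0, eventually_of_mem (ball_mem_nhds 0 hr0) ?_⟩
  refine eqOn_neg_mul_log_one_sub_of_hasDerivAt hr0 (min_le_right _ _) h0 fun x hx => ?_
  exact hasDerivAt_of_log_functional_equation hf0 (hfU x (hsub hx).1).differentiableAt
    (ne_one_of_mem_ball_zero hx (min_le_right _ _))
    (eventually_of_mem hV fun y hy => hVeq x (hsub hx).2 y hy)
end

section
/- Let m > 0 be a real number and define f : (−∞, m) → ℝ by f(x) = (1 − x/m)^(−m) − 1, where the power is the real power function (rpow) with positive base 1 − x/m. Then for all real x, y with x < m, y < m and x + y < m, setting w = m·((x/m)/(1 − x/m))·((y/m)/(1 − y/m)) (which satisfies w < m), one has the functional equation f(x+y) = f(x) + f(y) + f(x)·f(y) + f(w) + f(w)·( f(x) + f(y) + f(x)·f(y) ). In particular this holds for m = 2^(n−1) for every natural number n ≥ 1, i.e. for the functions f_n(x) = (1 − x/2^(n−1))^(−2^(n−1)) − 1. -/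
/-!
Writing `g t = 1 + f t = (1 - t/m) ^ (-m)`, the functional equation is the expanded form of
`g (x + y) = g x * g y * g w`. With `u = x/m`, `v = y/m` one has `w/m = u/(1-u) · v/(1-v)`, so
`(1 - u) (1 - v) (1 - w/m) = (1 - u) (1 - v) - u v = 1 - (u + v)`; raising this factorisation of
the positive number `1 - (x+y)/m` to the power `-m` gives the multiplicative identity.
-/

open Real

lemma eq_add_add_mul_of_one_add_eq_mul {R : Type*} [CommRing R] {p q r s : R}
    (h : 1 + s = (1 + p) * (1 + q) * (1 + r)) :
    s = p + q + p * q + r + r * (p + q + p * q) := by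
  linear_combination h

lemma one_sub_div_pos {m x : ℝ} (hm : 0 < m) (hx : x < m) : 0 < 1 - x / m :=
  sub_pos.2 ((div_lt_one hm).2 hx)

lemma one_sub_mul_one_sub_mul_one_sub_div_mul_div {K : Type*} [Field K] {u v : K}
    (hu : 1 - u ≠ 0) (hv : 1 - v ≠ 0) :
    (1 - u) * (1 - v) * (1 - u / (1 - u) * (v / (1 - v))) = 1 - (u + v) := by
  field_simp
  ring

lemma one_sub_div_mul_one_sub_div_mul_one_sub_div {K : Type*} [Field K] {m x y : K} (hm : m ≠ 0)
    (hx : 1 - x / m ≠ 0) (hy : 1 - y / m ≠ 0) :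
    (1 - x / m) * (1 - y / m) *
        (1 - m * ((x / m) / (1 - x / m)) * ((y / m) / (1 - y / m)) / m) =
      1 - (x + y) / m := by
  rw [mul_assoc m, mul_div_cancel_left₀ _ hm, add_div,
    one_sub_mul_one_sub_mul_one_sub_div_mul_div hx hy]

/-- For `m > 0`, the function `f x = (1 - x/m) ^ (-m) - 1` (real
power with positive base) satisfies, for `x < m`, `y < m`, `x + y < m` and
`w = m * ((x/m)/(1 - x/m)) * ((y/m)/(1 - y/m))` (which satisfies `w < m`), the
functional equation
`f (x+y) = f x + f y + f x * f y + f w + f w * (f x + f y + f x * f y)`.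
In particular this applies to `m = 2 ^ (n - 1)`, giving the functions `f_n`. -/
theorem fn_functional_equation (m : ℝ) (hm : 0 < m) (f : ℝ → ℝ)
    (hf : ∀ x : ℝ, f x = (1 - x / m) ^ (-m) - 1)
    (x y : ℝ) (hx : x < m) (hy : y < m) (hxy : x + y < m) :
    m * ((x / m) / (1 - x / m)) * ((y / m) / (1 - y / m)) < m ∧
    f (x + y) = f x + f y + f x * f y +
      f (m * ((x / m) / (1 - x / m)) * ((y / m) / (1 - y / m))) +
      f (m * ((x / m) / (1 - x / m)) * ((y / m) / (1 - y / m))) *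
        (f x + f y + f x * f y) := by
  set w := m * ((x / m) / (1 - x / m)) * ((y / m) / (1 - y / m))
  have hx' := one_sub_div_pos hm hx
  have hy' := one_sub_div_pos hm hy
  have hprod : (1 - x / m) * (1 - y / m) * (1 - w / m) = 1 - (x + y) / m :=
    one_sub_div_mul_one_sub_div_mul_one_sub_div hm.ne' hx'.ne' hy'.ne'
  have hw : 0 < 1 - w / m :=
    pos_of_mul_pos_right (hprod ▸ one_sub_div_pos hm hxy) (mul_pos hx' hy').le
  refine ⟨(div_lt_one hm).1 (sub_pos.1 hw), eq_add_add_mul_of_one_add_eq_mul ?_⟩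
  simp only [hf, add_sub_cancel]
  rw [← hprod, mul_rpow (mul_pos hx' hy').le hw.le, mul_rpow hx'.le hy'.le]
end

section
/- Let q be an indeterminate and define polynomials A_k ∈ ℤ[q] by the recursion A_0 = 1, A_1 = 1, and, for k ≥ 2, A_k = A_{k−1} + Σ_{s=1}^{k−1} ((k−1)!/(k−1−s)!)·q^s·A_{k−1−s}. Then for every k ≥ 1, A_k = Π_{j=1}^{k−1} (1 + j·q). -/
open Polynomial Finset

private noncomputable def Qpoly (n : ℕ) : Polynomial ℤ :=
  ∏ j ∈ Finset.Icc 1 n, (1 + (j : Polynomial ℤ) * Polynomial.X)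

private lemma Qpoly_zero : Qpoly 0 = 1 := by simp [Qpoly]

private lemma Qpoly_succ (n : ℕ) :
    Qpoly (n+1) = Qpoly n * (1 + ((n+1 : ℕ) : Polynomial ℤ) * Polynomial.X) := by
  rw [Qpoly, Qpoly, Finset.prod_Icc_succ_top (Nat.succ_le_succ (Nat.zero_le n))]

private lemma sum_Icc_shift (f : ℕ → Polynomial ℤ) (m : ℕ) :
    ∑ s ∈ Finset.Icc 1 m, f s = ∑ i ∈ Finset.range m, f (i+1) := by
  induction m with
  | zero => simp
  | succ m ih => rw [Finset.sum_Icc_succ_top (by omega), Finset.sum_range_succ, ih]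

private lemma sum_key (n : ℕ) :
    ∑ s ∈ Finset.Icc 1 (n+1),
      ((Nat.factorial (n+1) / Nat.factorial (n+1-s) : ℕ) : Polynomial ℤ) *
        Polynomial.X ^ s * Qpoly (n - s)
    = ((n+1 : ℕ) : Polynomial ℤ) * Polynomial.X * Qpoly n := by
  induction n with
  | zero => simp [Qpoly_zero]
  | succ n ih =>
    rw [sum_Icc_shift] at ih ⊢
    rw [Finset.sum_range_succ']
    have hfac : ∀ i : ℕ, i ≤ n →
        (Nat.factorial (n+2) / Nat.factorial (n - i) : ℕ)
          = (n+2) * (Nat.factorial (n+1) / Nat.factorial (n - i)) := by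
      intro i hi
      rw [show n+2 = (n+1)+1 from rfl, Nat.factorial_succ,
        Nat.mul_div_assoc _ (Nat.factorial_dvd_factorial (by omega))]
    have hterm : ∀ i ∈ Finset.range (n+1),
        ((Nat.factorial (n+1+1) / Nat.factorial (n+1+1 - (i+1+1)) : ℕ) : Polynomial ℤ) *
          Polynomial.X ^ (i+1+1) * Qpoly (n+1 - (i+1+1))
        = ((n+2 : ℕ) : Polynomial ℤ) * Polynomial.X *
            (((Nat.factorial (n+1) / Nat.factorial (n+1 - (i+1)) : ℕ) : Polynomial ℤ) *
              Polynomial.X ^ (i+1) * Qpoly (n - (i+1))) := by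
      intro i hi
      simp only [Finset.mem_range] at hi
      have h1 : n+1+1 - (i+1+1) = n - i := by omega
      have h2 : n+1 - (i+1+1) = n - (i+1) := by omega
      have h3 : n+1 - (i+1) = n - i := by omega
      rw [h1, h2, h3, hfac i (by omega)]
      push_cast
      ring
    rw [Finset.sum_congr rfl hterm, ← Finset.mul_sum, ih]
    rw [show n+1+1 - (0+1) = n+1 from by omega, show n+1 - (0+1) = n from by omega,
      show Nat.factorial (n+1+1) / Nat.factorial (n+1) = n+2 from by
      rw [Nat.factorial_succ, Nat.mul_div_cancel _ (Nat.factorial_pos _)], Qpoly_succ]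
    push_cast
    ring

private lemma main_key (A : ℕ → Polynomial ℤ)
    (h0 : A 0 = 1) (h1 : A 1 = 1)
    (hrec : ∀ k : ℕ, 2 ≤ k →
      A k = A (k - 1) + ∑ s ∈ Finset.Icc 1 (k - 1),
        ((Nat.factorial (k - 1) / Nat.factorial (k - 1 - s) : ℕ) : Polynomial ℤ) *
          Polynomial.X ^ s * A (k - 1 - s)) :
    ∀ k : ℕ, A k = Qpoly (k - 1) := by
  intro k
  induction k using Nat.strong_induction_on with
  | _ k IH =>
    match k with
    | 0 => simpa [Qpoly_zero] using h0
    | 1 => simpa [Qpoly_zero] using h1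
    | (n+2) =>
      rw [hrec (n+2) (by omega)]
      have hk1 : n+2-1 = n+1 := by omega
      rw [hk1]
      have hA : ∀ s ∈ Finset.Icc 1 (n+1),
          ((Nat.factorial (n+1) / Nat.factorial (n+1-s) : ℕ) : Polynomial ℤ) *
            Polynomial.X ^ s * A (n+1-s)
          = ((Nat.factorial (n+1) / Nat.factorial (n+1-s) : ℕ) : Polynomial ℤ) *
            Polynomial.X ^ s * Qpoly (n-s) := by
        intro s hs
        have h := IH (n+1-s) (by omega)
        rw [show n+1-s-1 = n-s from by omega] at h
        rw [h]
      rw [Finset.sum_congr rfl hA, sum_key n, IH (n+1) (by omega),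
        show n+1-1 = n from by omega, Qpoly_succ]
      ring

/-- If `A : ℕ → ℤ[q]` satisfies `A 0 = 1`, `A 1 = 1` and, for
`k ≥ 2`, `A k = A (k-1) + ∑_{s=1}^{k-1} ((k-1)!/(k-1-s)!) * q^s * A (k-1-s)`,
then `A k = ∏_{j=1}^{k-1} (1 + j * q)` for all `k ≥ 1`. -/
theorem poisson_poincare_polynomial (A : ℕ → Polynomial ℤ)
    (h0 : A 0 = 1) (h1 : A 1 = 1)
    (hrec : ∀ k : ℕ, 2 ≤ k →
      A k = A (k - 1) + ∑ s ∈ Finset.Icc 1 (k - 1),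
        ((Nat.factorial (k - 1) / Nat.factorial (k - 1 - s) : ℕ) : Polynomial ℤ) *
          Polynomial.X ^ s * A (k - 1 - s)) :
    ∀ k : ℕ, 1 ≤ k →
      A k = ∏ j ∈ Finset.Icc 1 (k - 1), (1 + (j : Polynomial ℤ) * Polynomial.X) := by
  intro k _
  exact main_key A h0 h1 hrec k
end

section
/- Let 𝕂 be a commutative ring and let M and N be 𝕂-modules. Write T̄(M) = ⨁_{k≥1} M^{⊗k} for the 𝕂-module underlying the reduced (non-unital) tensor algebra on M. Then there is an isomorphism of 𝕂-modules T̄(M ⊕ N) ≅ T̄(M) ⊕ T̄(N) ⊕ (T̄(M) ⊗ T̄(N)) ⊕ (T̄(N) ⊗ T̄(M)) ⊕ (T̄(M ⊕ N) ⊗ T̄(M) ⊗ T̄(N)). -/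
/-!
Expanding tensor powers of `M × N` letter by letter, `T̄(M × N)` is the direct sum, over the
nonempty words `w` in two letters, of the tensor products `M_w` of the letters of `w`. Sorting
the words by their first letter gives `T̄(M × N) ≅ X ⊕ Y`, and splitting off the leading run of
a word gives `X ≅ T̄M ⊕ T̄M ⊗ Y` and `Y ≅ T̄N ⊕ T̄N ⊗ X`. Unfolding each of these twice gives
`X ⊕ Y ≅ T̄M ⊕ T̄N ⊕ T̄M ⊗ T̄N ⊕ T̄N ⊗ T̄M ⊕ T̄M ⊗ T̄N ⊗ (X ⊕ Y)`.
-/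

open scoped TensorProduct DirectSum

/-- The `𝕂`-module underlying the reduced (non-unital) tensor algebra on `M`:
`T̄(M) = ⨁_{k ≥ 1} M^{⊗k}`. -/
def ReducedTensorAlgebra (𝕂 : Type*) [CommRing 𝕂] (M : Type*) [AddCommGroup M]
    [Module 𝕂 M] : Type _ :=
  ⨁ k : {n : ℕ // 0 < n}, TensorPower 𝕂 (k : ℕ) M

noncomputable instance (𝕂 : Type*) [CommRing 𝕂] (M : Type*) [AddCommGroup M]
    [Module 𝕂 M] : AddCommGroup (ReducedTensorAlgebra 𝕂 M) :=
  inferInstanceAs (AddCommGroup (⨁ k : {n : ℕ // 0 < n}, TensorPower 𝕂 (k : ℕ) M))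

noncomputable instance (𝕂 : Type*) [CommRing 𝕂] (M : Type*) [AddCommGroup M]
    [Module 𝕂 M] : Module 𝕂 (ReducedTensorAlgebra 𝕂 M) :=
  inferInstanceAs (Module 𝕂 (⨁ k : {n : ℕ // 0 < n}, TensorPower 𝕂 (k : ℕ) M))

universe u v w

noncomputable section

namespace DirectSum

variable (R : Type*) [Semiring R]

def reindexLequiv {ι κ : Type*} (c : ι ≃ κ) (A : κ → Type*)
    [∀ k, AddCommMonoid (A k)] [∀ k, Module R (A k)] :
    (⨁ i, A (c i)) ≃ₗ[R] ⨁ k, A k :=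
  (lequivCongrLeft R c.symm).symm

def sumLequivProd {ι κ : Type*} [DecidableEq ι] [DecidableEq κ] (A : ι ⊕ κ → Type*)
    [∀ s, AddCommMonoid (A s)] [∀ s, Module R (A s)] :
    (⨁ s, A s) ≃ₗ[R] (⨁ i, A (.inl i)) × ⨁ j, A (.inr j) :=
  LinearEquiv.ofLinearMap
    (toModule R _ _ fun
      | .inl i => (LinearMap.inl R _ _).comp (lof R _ (fun i => A (.inl i)) i)
      | .inr j => (LinearMap.inr R _ _).comp (lof R _ (fun j => A (.inr j)) j))
    ((toModule R _ _ fun i => lof R _ A (.inl i)).coprod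
      (toModule R _ _ fun j => lof R _ A (.inr j)))
    (LinearMap.prod_ext (linearMap_ext _ fun i => LinearMap.ext fun x => by simp [toModule_lof])
      (linearMap_ext _ fun j => LinearMap.ext fun x => by simp [toModule_lof]))
    (linearMap_ext _ fun
      | .inl i => LinearMap.ext fun x => by simp [toModule_lof]
      | .inr j => LinearMap.ext fun x => by simp [toModule_lof])

end DirectSum

def TensorPower.succEquiv (R : Type*) [CommSemiring R] (P : Type*) [AddCommMonoid P]
    [Module R P] (n : ℕ) : (⨂[R]^(n + 1) P) ≃ₗ[R] P ⊗[R] ⨂[R]^n P :=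
  (TensorProduct.comm R _ _ ≪≫ₗ
    TensorProduct.congr (.refl R _) (PiTensorProduct.subsingletonEquiv 0).symm ≪≫ₗ
    TensorPower.mulEquiv).symm

namespace ReducedTensorAlgebra

variable (R : Type*) [CommRing R] (P : Type*) [AddCommGroup P] [Module R P]

def equivSucc : ReducedTensorAlgebra R P ≃ₗ[R] ⨁ n : ℕ, ⨂[R]^(n + 1) P :=
  (DirectSum.reindexLequiv R Equiv.pnatEquivNat.symm _).symm

def equivTensor : ReducedTensorAlgebra R P ≃ₗ[R] P ⊗[R] ⨁ n : ℕ, ⨂[R]^n P :=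
  equivSucc R P ≪≫ₗ DirectSum.congrLinearEquiv (TensorPower.succEquiv R P) ≪≫ₗ
    (TensorProduct.directSumRight R R P _).symm

end ReducedTensorAlgebra

namespace List

def lengthZeroEquiv (α : Type*) : Unit ≃ {w : List α // w.length = 0} where
  toFun _ := ⟨[], rfl⟩
  invFun _ := ()
  left_inv _ := rfl
  right_inv w := Subtype.ext (length_eq_zero_iff.mp w.2).symm

def lengthSuccEquiv (n : ℕ) :
    {w : List Bool // w.length = n} ⊕ {w : List Bool // w.length = n} ≃
      {w : List Bool // w.length = n + 1} where
  toFun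
    | .inl w => ⟨true :: w.1, by simp [w.2]⟩
    | .inr w => ⟨false :: w.1, by simp [w.2]⟩
  invFun
    | ⟨true :: w, h⟩ => .inl ⟨w, by simpa using h⟩
    | ⟨false :: w, h⟩ => .inr ⟨w, by simpa using h⟩
  left_inv
    | .inl _ => rfl
    | .inr _ => rfl
  right_inv
    | ⟨true :: _, _⟩ => rfl
    | ⟨false :: _, _⟩ => rfl

def splitLeadingRun (b : Bool) : List Bool → ℕ ⊕ ℕ × List Bool
  | [] => .inl 0
  | c :: w =>
    if c = b then (splitLeadingRun b w).map Nat.succ (Prod.map Nat.succ id) else .inr (0, w)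

def joinLeadingRun (b : Bool) : ℕ ⊕ ℕ × List Bool → List Bool
  | .inl k => replicate k b
  | .inr (k, u) => replicate k b ++ (!b) :: u

def leadingRunEquiv (b : Bool) : List Bool ≃ ℕ ⊕ ℕ × List Bool where
  toFun := splitLeadingRun b
  invFun := joinLeadingRun b
  left_inv w := by
    induction w with
    | nil => rfl
    | cons c w ih =>
      by_cases hc : c = b
      · subst hc
        rcases hs : splitLeadingRun c w with k | ⟨k, u⟩ <;>
          simp_all [splitLeadingRun, joinLeadingRun, replicate_succ]
      · obtain rfl : c = !b := by cases b <;> simpa using hc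
        simp [splitLeadingRun, joinLeadingRun]
  right_inv
    | .inl k => by induction k <;> simp_all [splitLeadingRun, joinLeadingRun, replicate_succ]
    | .inr (k, u) => by induction k <;> simp_all [splitLeadingRun, joinLeadingRun, replicate_succ]

end List

section Words

variable (R : Type u) [CommRing R] (M : Type v) (N : Type w)
  [AddCommGroup M] [Module R M] [AddCommGroup N] [Module R N]

/-- `true` stands for a letter from `M` and `false` for one from `N`; the empty word gives `R`,
lifted to a universe that holds every word. -/
def wordModule : List Bool → ModuleCat.{max u v w} R
  | [] => ModuleCat.of R (ULift.{max v w} R)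
  | true :: l => ModuleCat.of R (M ⊗[R] wordModule l)
  | false :: l => ModuleCat.of R (N ⊗[R] wordModule l)

namespace wordModule

def appendEquiv : ∀ u v : List Bool,
    wordModule R M N (u ++ v) ≃ₗ[R] wordModule R M N u ⊗[R] wordModule R M N v
  | [], _ =>
      (TensorProduct.lid R _).symm ≪≫ₗ TensorProduct.congr ULift.moduleEquiv.symm (.refl R _)
  | true :: u, v =>
      TensorProduct.congr (.refl R M) (appendEquiv u v) ≪≫ₗ (TensorProduct.assoc R _ _ _).symm
  | false :: u, v =>
      TensorProduct.congr (.refl R N) (appendEquiv u v) ≪≫ₗ (TensorProduct.assoc R _ _ _).symm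

/- Here and below, `P` is the module of the letter `b` and `e` is the identity
`wordModule (b :: l) = P ⊗ wordModule l`; this treats both letters at once. -/
def replicateEquiv (b : Bool) (P : Type*) [AddCommGroup P] [Module R P]
    (e : ∀ l, wordModule R M N (b :: l) ≃ₗ[R] P ⊗[R] wordModule R M N l) :
    ∀ k : ℕ, (⨂[R]^k P) ≃ₗ[R] wordModule R M N (List.replicate k b)
  | 0 => PiTensorProduct.isEmptyEquiv (Fin 0) ≪≫ₗ ULift.moduleEquiv.symm
  | k + 1 =>
      TensorPower.succEquiv R P k ≪≫ₗ
        TensorProduct.congr (.refl R P) (replicateEquiv b P e k) ≪≫ₗ (e _).symm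

end wordModule

def TensorPower.prodEquivWords : ∀ n : ℕ,
    (⨂[R]^n (M × N)) ≃ₗ[R] ⨁ w : {w : List Bool // w.length = n}, wordModule R M N w
  | 0 =>
      PiTensorProduct.isEmptyEquiv (Fin 0) ≪≫ₗ ULift.moduleEquiv.symm ≪≫ₗ
        (DirectSum.lid R (wordModule R M N []) Unit).symm ≪≫ₗ
        DirectSum.reindexLequiv R (List.lengthZeroEquiv Bool) (wordModule R M N ·)
  | n + 1 =>
      TensorPower.succEquiv R (M × N) n ≪≫ₗ
        TensorProduct.congr (.refl R _) (TensorPower.prodEquivWords n) ≪≫ₗ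
        TensorProduct.prodLeft R R M N _ ≪≫ₗ
        (TensorProduct.directSumRight R R M _).prodCongr
          (TensorProduct.directSumRight R R N _) ≪≫ₗ
        (DirectSum.sumLequivProd R fun s => wordModule R M N (List.lengthSuccEquiv n s)).symm ≪≫ₗ
        DirectSum.reindexLequiv R (List.lengthSuccEquiv n) (wordModule R M N ·)

def TensorPower.directSumProdEquivWords :
    (⨁ n : ℕ, ⨂[R]^n (M × N)) ≃ₗ[R] ⨁ w : List Bool, wordModule R M N w :=
  DirectSum.congrLinearEquiv (TensorPower.prodEquivWords R M N) ≪≫ₗ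
    (DirectSum.sigmaLcurryEquiv R).symm ≪≫ₗ
    DirectSum.reindexLequiv R (Equiv.sigmaFiberEquiv List.length) (wordModule R M N ·)

abbrev WordsFrom (b : Bool) : Type (max u v w) := ⨁ l : List Bool, wordModule R M N (b :: l)

def ReducedTensorAlgebra.prodEquivWordsFrom :
    ReducedTensorAlgebra R (M × N) ≃ₗ[R] WordsFrom R M N true × WordsFrom R M N false :=
  ReducedTensorAlgebra.equivTensor R (M × N) ≪≫ₗ
    TensorProduct.congr (.refl R _) (TensorPower.directSumProdEquivWords R M N) ≪≫ₗ
    TensorProduct.prodLeft R R M N _ ≪≫ₗ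
    (TensorProduct.directSumRight R R M _).prodCongr (TensorProduct.directSumRight R R N _)

end Words

namespace WordsFrom

variable (R : Type u) [CommRing R] (M : Type v) (N : Type w)
  [AddCommGroup M] [Module R M] [AddCommGroup N] [Module R N]
  (b : Bool) (P : Type*) [AddCommGroup P] [Module R P]

def runsEquiv (e : ∀ l, wordModule R M N (b :: l) ≃ₗ[R] P ⊗[R] wordModule R M N l) :
    (⨁ k : ℕ, wordModule R M N (List.replicate (k + 1) b)) ≃ₗ[R] ReducedTensorAlgebra R P :=
  DirectSum.congrLinearEquiv (fun k => (wordModule.replicateEquiv R M N b P e (k + 1)).symm) ≪≫ₗ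
    (ReducedTensorAlgebra.equivSucc R P).symm

def leadingRunEquiv (e : ∀ l, wordModule R M N (b :: l) ≃ₗ[R] P ⊗[R] wordModule R M N l) :
    WordsFrom R M N b ≃ₗ[R]
      ReducedTensorAlgebra R P × (ReducedTensorAlgebra R P ⊗[R] WordsFrom R M N (!b)) :=
  (DirectSum.reindexLequiv R (List.leadingRunEquiv b).symm
      (fun l => wordModule R M N (b :: l))).symm ≪≫ₗ
    DirectSum.sumLequivProd R _ ≪≫ₗ
    (runsEquiv R M N b P e).prodCongr
      (DirectSum.congrLinearEquiv (fun p : ℕ × List Bool =>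
          wordModule.appendEquiv R M N (List.replicate (p.1 + 1) b) ((!b) :: p.2)) ≪≫ₗ
        (TensorProduct.directSum R R (fun k : ℕ => wordModule R M N (List.replicate (k + 1) b))
          (fun l => wordModule R M N ((!b) :: l))).symm ≪≫ₗ
        TensorProduct.congr (runsEquiv R M N b P e) (.refl R _))

end WordsFrom

section AlternatingRuns

open LinearEquiv TensorProduct

variable {R : Type*} [CommSemiring R] {T X Y A B : Type*}
  [AddCommMonoid T] [Module R T] [AddCommMonoid X] [Module R X] [AddCommMonoid Y] [Module R Y]
  [AddCommMonoid A] [Module R A] [AddCommMonoid B] [Module R B]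

def unfoldTwiceEquiv (eX : X ≃ₗ[R] A × (A ⊗[R] Y)) (eY : Y ≃ₗ[R] B × (B ⊗[R] X)) :
    X ≃ₗ[R] A × (A ⊗[R] B) × ((A ⊗[R] B) ⊗[R] X) :=
  eX ≪≫ₗ (refl R A).prodCongr
    (congr (refl R A) eY ≪≫ₗ prodRight R R A B _ ≪≫ₗ
      (refl R _).prodCongr (TensorProduct.assoc R A B X).symm)

def alternatingRunsEquiv (eT : T ≃ₗ[R] X × Y)
    (eX : X ≃ₗ[R] A × (A ⊗[R] Y)) (eY : Y ≃ₗ[R] B × (B ⊗[R] X)) :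
    T ≃ₗ[R] A × B × (A ⊗[R] B) × (B ⊗[R] A) × (T ⊗[R] (A ⊗[R] B)) :=
  let shuffle :
      ((A × (A ⊗[R] B) × ((A ⊗[R] B) ⊗[R] X)) × (B × (B ⊗[R] A) × ((B ⊗[R] A) ⊗[R] Y))) ≃ₗ[R]
        A × B × (A ⊗[R] B) × (B ⊗[R] A) × (((A ⊗[R] B) ⊗[R] X) × ((B ⊗[R] A) ⊗[R] Y)) :=
    { toFun p := (p.1.1, p.2.1, p.1.2.1, p.2.2.1, p.1.2.2, p.2.2.2)
      invFun q := ((q.1, q.2.2.1, q.2.2.2.2.1), (q.2.1, q.2.2.2.1, q.2.2.2.2.2))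
      left_inv _ := rfl
      right_inv _ := rfl
      map_add' _ _ := rfl
      map_smul' _ _ := rfl }
  let tail : (((A ⊗[R] B) ⊗[R] X) × ((B ⊗[R] A) ⊗[R] Y)) ≃ₗ[R] T ⊗[R] (A ⊗[R] B) :=
    (refl R _).prodCongr (congr (TensorProduct.comm R B A) (refl R Y)) ≪≫ₗ
      (prodRight R R _ X Y).symm ≪≫ₗ TensorProduct.comm R _ _ ≪≫ₗ congr eT.symm (refl R _)
  eT ≪≫ₗ (unfoldTwiceEquiv eX eY).prodCongr (unfoldTwiceEquiv eY eX) ≪≫ₗ shuffle ≪≫ₗ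
    (refl R A).prodCongr ((refl R B).prodCongr ((refl R _).prodCongr ((refl R _).prodCongr tail)))

end AlternatingRuns

/-- the reduced tensor algebra satisfies the defining equation of
functors of type `x/(1-x)`:
`T̄(M ⊕ N) ≅ T̄(M) ⊕ T̄(N) ⊕ T̄(M)⊗T̄(N) ⊕ T̄(N)⊗T̄(M) ⊕ T̄(M ⊕ N)⊗T̄(M)⊗T̄(N)`
as `𝕂`-modules. -/
theorem reducedTensorAlgebra_prod_iso (𝕂 : Type*) [CommRing 𝕂]
    (M N : Type*) [AddCommGroup M] [Module 𝕂 M] [AddCommGroup N] [Module 𝕂 N] :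
    Nonempty (ReducedTensorAlgebra 𝕂 (M × N) ≃ₗ[𝕂]
      ReducedTensorAlgebra 𝕂 M × ReducedTensorAlgebra 𝕂 N ×
        (ReducedTensorAlgebra 𝕂 M ⊗[𝕂] ReducedTensorAlgebra 𝕂 N) ×
        (ReducedTensorAlgebra 𝕂 N ⊗[𝕂] ReducedTensorAlgebra 𝕂 M) ×
        (ReducedTensorAlgebra 𝕂 (M × N) ⊗[𝕂]
          (ReducedTensorAlgebra 𝕂 M ⊗[𝕂] ReducedTensorAlgebra 𝕂 N))) :=
  ⟨alternatingRunsEquiv (ReducedTensorAlgebra.prodEquivWordsFrom 𝕂 M N)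
    (WordsFrom.leadingRunEquiv 𝕂 M N true M fun _ => .refl 𝕂 _)
    (WordsFrom.leadingRunEquiv 𝕂 M N false N fun _ => .refl 𝕂 _)⟩
end
end
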